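/- arXiv:1208.6108 — 6 statements merged into one kernel-verified Lean document; each statement's English description precedes it below -/
import Mathlib

section
/- Let α ≥ 1 and β ≥ 1 be integers, let G = (G₁,G₂) ∈ ℂ[X,Y]² satisfy det J_G(X,Y) = c·X^{β−α−1} identically for some nonzero constant c ∈ ℂ (in particular β ≥ α+1), let H ∈ ℂ[U,V] be irreducible with zero set {(u,v) : H(u,v) = 0} = {G(0,y) : y ∈ ℂ}, and let γ ≥ 1 be an integer and S ∈ ℂ[X,Y] with S(0,Y) ≢ 0 and H(G(X,Y)) = X^{γ}·S(X,Y). If γ = 1, then β − α − 1 = 0, and for every Y₀ ∈ ℂ one has S(0,Y₀) = 0 if and only if G(0,Y₀) is a singular point of the curve {H = 0}. -/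
/-
Differentiating `H(G₁, G₂) = X·S` and restricting to the axis `X = 0` shows that the gradient of
`H` at `G(0, y)`, multiplied by the Jacobian matrix of `G` at `(0, y)`, is the row `(S(0, y), 0)`.
If `det J_G` vanished on the axis, Cramer's rule would give `S(0, y) · ∂_Y G(0, y) ≡ 0`; as
`S(0, ·) ≢ 0`, `G` would be constant on the axis and `{H = 0}` a single point, which no plane
curve is. Hence `β - α - 1 = 0`, so `J_G ≡ c` is invertible and the gradient of `H` at `G(0, y)`
vanishes exactly when `S(0, y)` does.
-/

open MvPolynomial Filter

abbrev PolyPair := MvPolynomial (Fin 2) ℂ × MvPolynomial (Fin 2) ℂ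

noncomputable def eval2 (p : MvPolynomial (Fin 2) ℂ) (x y : ℂ) : ℂ :=
  MvPolynomial.eval ![x, y] p

noncomputable def jacDet (P Q : MvPolynomial (Fin 2) ℂ) : MvPolynomial (Fin 2) ℂ :=
  pderiv 0 P * pderiv 1 Q - pderiv 1 P * pderiv 0 Q

noncomputable def polyMap (F : PolyPair) (p : ℂ × ℂ) : ℂ × ℂ :=
  (eval2 F.1 p.1 p.2, eval2 F.2 p.1 p.2)

/-- `F` is a Keller mapping: its Jacobian determinant is a nonzero constant. -/
def IsKeller (F : PolyPair) : Prop :=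
  ∃ c : ℂ, c ≠ 0 ∧ jacDet F.1 F.2 = MvPolynomial.C c

/-- `(u₀,v₀)` is a singular point of the plane curve `{H = 0}`. -/
def IsSingularPoint (H : MvPolynomial (Fin 2) ℂ) (p : ℂ × ℂ) : Prop :=
  eval2 H p.1 p.2 = 0 ∧ eval2 (pderiv 0 H) p.1 p.2 = 0 ∧ eval2 (pderiv 1 H) p.1 p.2 = 0

/-- `G` is the `R`-dual of `F`, where `R(x,y) = (x^{-α}, x^β y + x^{-α} φ(x))`. -/
def IsRDual (F G : PolyPair) (α β : ℕ) (φ : Polynomial ℂ) : Prop :=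
  ∀ x : ℂ, x ≠ 0 → ∀ y : ℂ,
    polyMap G (x, y) = polyMap F ((x ^ α)⁻¹, x ^ β * y + (x ^ α)⁻¹ * Polynomial.eval x φ)

/-- `p` is an asymptotic value of `F` : a limit of `F` along a curve tending to infinity. -/
def IsAsympValue (F : PolyPair) (p : ℂ × ℂ) : Prop :=
  ∃ γ : ℝ → ℂ × ℂ, Continuous γ ∧ Tendsto (fun t => ‖γ t‖) atTop atTop ∧
    Tendsto (fun t => polyMap F (γ t)) atTop (nhds p)

/-- `F` is a polynomial automorphism of `ℂ²`. -/
def IsPolyAuto (F : PolyPair) : Prop :=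
  ∃ Finv : PolyPair, (∀ p, polyMap F (polyMap Finv p) = p) ∧
    (∀ p, polyMap Finv (polyMap F p) = p)

theorem MvPolynomial.pderiv_aeval {R σ τ : Type*} [CommSemiring R] [Fintype τ]
    (g : τ → MvPolynomial σ R) (p : MvPolynomial τ R) (i : σ) :
    pderiv i (aeval g p) = ∑ j, aeval g (pderiv j p) * pderiv i (g j) := by
  classical
  induction p using MvPolynomial.induction_on with
  | C a => simp
  | add p q hp hq => simp only [map_add, hp, hq, add_mul, Finset.sum_add_distrib]
  | mul_X p j hp =>
    simp only [map_mul, map_add, aeval_X, pderiv_mul, hp, pderiv_X, add_mul,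
      Finset.sum_add_distrib, Finset.sum_mul]
    congr 1
    · exact Finset.sum_congr rfl fun k _ => by ring
    · rw [Finset.sum_eq_single j (fun k _ hk => by simp [hk.symm]) (by simp)]
      simp

theorem mul_det_eq_of_linear_eqs {R : Type*} [CommRing R] {a b p q r t s : R}
    (h₁ : a * p + b * q = s) (h₂ : a * r + b * t = 0) :
    a * (p * t - r * q) = s * t ∧ b * (p * t - r * q) = -(s * r) :=
  ⟨by linear_combination t * h₁ - q * h₂, by linear_combination p * h₂ - r * h₁⟩

theorem eq_zero_and_eq_zero_iff_of_det_ne_zero {K : Type*} [Field K] {a b p q r t s : K}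
    (h₁ : a * p + b * q = s) (h₂ : a * r + b * t = 0) (hdet : p * t - r * q ≠ 0) :
    a = 0 ∧ b = 0 ↔ s = 0 := by
  refine ⟨fun ⟨ha, hb⟩ => by simpa [ha, hb] using h₁.symm, fun hs => ?_⟩
  obtain ⟨ha, hb⟩ := mul_det_eq_of_linear_eqs h₁ h₂
  simp only [hs, zero_mul, neg_zero, mul_eq_zero, hdet, or_false] at ha hb
  exact ⟨ha, hb⟩

theorem Polynomial.eval_eq_eval_zero_of_derivative_eq_zero {R : Type*} [Semiring R]
    [IsAddTorsionFree R] {p : Polynomial R}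
    (h : Polynomial.derivative p = 0) (y : R) : p.eval y = p.eval 0 := by
  rw [Polynomial.eq_C_of_derivative_eq_zero h]
  simp

noncomputable def sliceAt (u : ℂ) : MvPolynomial (Fin 2) ℂ →ₐ[ℂ] Polynomial ℂ :=
  aeval ![Polynomial.C u, Polynomial.X]

lemma eval_sliceAt (u y : ℂ) (p : MvPolynomial (Fin 2) ℂ) :
    (sliceAt u p).eval y = eval2 p u y := by
  rw [← Polynomial.coe_aeval_eq_eval, sliceAt, comp_aeval_apply]
  exact congrArg (aeval · p) (funext fun i => by fin_cases i <;> simp)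

lemma sliceAt_zero_X_zero : sliceAt 0 (X 0) = 0 := by
  simp [sliceAt]

lemma sliceAt_pderiv_one (u : ℂ) (p : MvPolynomial (Fin 2) ℂ) :
    sliceAt u (pderiv 1 p) = Polynomial.derivative (sliceAt u p) := by
  induction p using MvPolynomial.induction_on with
  | C a => simp [sliceAt]
  | add p q hp hq => simp only [map_add, hp, hq]
  | mul_X p i hp =>
    simp only [sliceAt] at hp ⊢
    fin_cases i <;>
      simp only [Fin.zero_eta, Fin.mk_one, pderiv_mul, pderiv_X_self, map_zero, map_one,
        pderiv_X_of_ne (show (0 : Fin 2) ≠ 1 by decide), map_mul, map_add, aeval_X,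
        Matrix.cons_val_zero, Matrix.cons_val_one, Matrix.cons_val_fin_one, hp,
        Polynomial.derivative_mul, Polynomial.derivative_C, Polynomial.derivative_X]

lemma continuous_eval2_left (p : MvPolynomial (Fin 2) ℂ) (v : ℂ) :
    Continuous fun u => eval2 p u v :=
  (MvPolynomial.continuous_eval p).comp (by fun_prop)

lemma eval2_aeval (G : PolyPair) (P : MvPolynomial (Fin 2) ℂ) (x y : ℂ) :
    eval2 (aeval ![G.1, G.2] P) x y = eval2 P (polyMap G (x, y)).1 (polyMap G (x, y)).2 := by
  show aeval ![x, y] (aeval ![G.1, G.2] P) = aeval ![aeval ![x, y] G.1, aeval ![x, y] G.2] P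
  rw [comp_aeval_apply]
  exact congrArg (aeval · P) (funext fun i => by fin_cases i <;> rfl)

/-- Off the line `u = u₀` every slice `H(u, ·)` has no root, hence is constant; by continuity so is
`H(u₀, ·)`, which therefore cannot vanish at `v₀` alone. -/
theorem setOf_eval2_eq_zero_ne_singleton (H : MvPolynomial (Fin 2) ℂ) (p₀ : ℂ × ℂ) :
    {p : ℂ × ℂ | eval2 H p.1 p.2 = 0} ≠ {p₀} := by
  obtain ⟨u₀, v₀⟩ := p₀
  intro hset
  have hmem : ∀ u v, eval2 H u v = 0 ↔ u = u₀ ∧ v = v₀ := fun u v => by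
    simpa using Set.ext_iff.mp hset (u, v)
  have hconst_off : ∀ u ≠ u₀, ∀ v, eval2 H u v = eval2 H u v₀ := by
    intro u hu v
    have hdeg : (sliceAt u H).degree = 0 := by
      by_contra hdeg
      obtain ⟨w, hw⟩ := IsAlgClosed.exists_root _ hdeg
      rw [Polynomial.IsRoot, eval_sliceAt] at hw
      exact hu ((hmem u w).mp hw).1
    rw [← eval_sliceAt, ← eval_sliceAt, Polynomial.eq_C_of_degree_eq_zero hdeg]
    simp
  have hconst : ∀ v, eval2 H u₀ v = eval2 H u₀ v₀ := fun v =>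
    congrFun ((continuous_eval2_left H v).ext_on (dense_compl_singleton u₀)
      (continuous_eval2_left H v₀) fun u hu => hconst_off u hu v) u₀
  have hroot : eval2 H u₀ (v₀ + 1) = 0 := by
    rw [hconst, hmem]
    exact ⟨rfl, rfl⟩
  simpa using ((hmem _ _).mp hroot).2

section

variable {G : PolyPair} {H S : MvPolynomial (Fin 2) ℂ}

lemma sliceAt_zero_gradient (hfac : aeval ![G.1, G.2] H = X 0 * S) :
    sliceAt 0 (aeval ![G.1, G.2] (pderiv 0 H)) * sliceAt 0 (pderiv 0 G.1) +
        sliceAt 0 (aeval ![G.1, G.2] (pderiv 1 H)) * sliceAt 0 (pderiv 0 G.2) = sliceAt 0 S ∧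
      sliceAt 0 (aeval ![G.1, G.2] (pderiv 0 H)) * sliceAt 0 (pderiv 1 G.1) +
        sliceAt 0 (aeval ![G.1, G.2] (pderiv 1 H)) * sliceAt 0 (pderiv 1 G.2) = 0 := by
  have hchain : ∀ i, pderiv i (X 0 * S) =
      aeval ![G.1, G.2] (pderiv 0 H) * pderiv i G.1 +
        aeval ![G.1, G.2] (pderiv 1 H) * pderiv i G.2 := fun i => by
    rw [← hfac, pderiv_aeval, Fin.sum_univ_two]
    rfl
  constructor
  · have := congrArg (sliceAt 0) (hchain 0)
    simp only [pderiv_mul, pderiv_X_self, map_add, map_mul, sliceAt_zero_X_zero] at this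
    simpa using this.symm
  · have := congrArg (sliceAt 0) (hchain 1)
    simp only [pderiv_mul, pderiv_X_of_ne (show (0 : Fin 2) ≠ 1 by decide), map_add, map_mul,
      sliceAt_zero_X_zero] at this
    simpa using this.symm

lemma isSingularPoint_polyMap_zero_iff (hfac : aeval ![G.1, G.2] H = X 0 * S) (y : ℂ) :
    IsSingularPoint H (polyMap G (0, y)) ↔
      (sliceAt 0 (aeval ![G.1, G.2] (pderiv 0 H))).eval y = 0 ∧
        (sliceAt 0 (aeval ![G.1, G.2] (pderiv 1 H))).eval y = 0 := by
  have hH : eval2 H (polyMap G (0, y)).1 (polyMap G (0, y)).2 = 0 := by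
    rw [← eval2_aeval, hfac]
    simp [eval2]
  simp only [IsSingularPoint, eval_sliceAt, eval2_aeval, hH, true_and]

lemma sliceAt_zero_jacDet_ne_zero (hfac : aeval ![G.1, G.2] H = X 0 * S) (hS : sliceAt 0 S ≠ 0)
    (hzero : {p : ℂ × ℂ | eval2 H p.1 p.2 = 0} = {p : ℂ × ℂ | ∃ y : ℂ, p = polyMap G (0, y)}) :
    sliceAt 0 (jacDet G.1 G.2) ≠ 0 := by
  intro hJ
  obtain ⟨h₁, h₂⟩ := sliceAt_zero_gradient hfac
  obtain ⟨hA, hB⟩ := mul_det_eq_of_linear_eqs h₁ h₂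
  simp only [jacDet, map_sub, map_mul] at hJ
  rw [hJ, mul_zero, eq_comm] at hA hB
  rw [neg_eq_zero] at hB
  rw [mul_eq_zero] at hA hB
  have hG₁ : Polynomial.derivative (sliceAt 0 G.1) = 0 := by
    rw [← sliceAt_pderiv_one]
    exact hB.resolve_left hS
  have hG₂ : Polynomial.derivative (sliceAt 0 G.2) = 0 := by
    rw [← sliceAt_pderiv_one]
    exact hA.resolve_left hS
  have hconst : ∀ y, polyMap G (0, y) = polyMap G (0, 0) := fun y => by
    simp only [polyMap, ← eval_sliceAt, Polynomial.eval_eq_eval_zero_of_derivative_eq_zero hG₁,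
      Polynomial.eval_eq_eval_zero_of_derivative_eq_zero hG₂]
  apply setOf_eval2_eq_zero_ne_singleton H (polyMap G (0, 0))
  rw [hzero]
  ext p
  simp [hconst]

lemma eval2_eq_zero_iff_isSingularPoint (hfac : aeval ![G.1, G.2] H = X 0 * S) {c : ℂ}
    (hc : c ≠ 0) (hJ : jacDet G.1 G.2 = C c) (y : ℂ) :
    eval2 S 0 y = 0 ↔ IsSingularPoint H (polyMap G (0, y)) := by
  obtain ⟨h₁, h₂⟩ := sliceAt_zero_gradient hfac
  replace h₁ := congrArg (Polynomial.eval y) h₁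
  replace h₂ := congrArg (Polynomial.eval y) h₂
  have hdet := congrArg (fun P => (sliceAt 0 P).eval y) hJ
  simp only [Polynomial.eval_add, Polynomial.eval_mul, Polynomial.eval_zero] at h₁ h₂
  simp only [jacDet, map_sub, map_mul, Polynomial.eval_sub, Polynomial.eval_mul] at hdet
  rw [isSingularPoint_polyMap_zero_iff hfac, ← eval_sliceAt]
  refine (eq_zero_and_eq_zero_iff_of_det_ne_zero h₁ h₂ ?_).symm
  rw [hdet]
  simpa [sliceAt] using hc

end

theorem gamma_eq_one_case_general (α β : ℕ)
    (G : PolyPair) (c : ℂ) (hc : c ≠ 0)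
    (hdet : jacDet G.1 G.2 = MvPolynomial.C c * (X 0 : MvPolynomial (Fin 2) ℂ) ^ (β - α - 1))
    (H : MvPolynomial (Fin 2) ℂ)
    (hzero : {p : ℂ × ℂ | eval2 H p.1 p.2 = 0} = {p : ℂ × ℂ | ∃ y : ℂ, p = polyMap G (0, y)})
    (γ : ℕ) (S : MvPolynomial (Fin 2) ℂ)
    (hS0 : ∃ y : ℂ, eval2 S 0 y ≠ 0)
    (hfac : aeval ![G.1, G.2] H = (X 0 : MvPolynomial (Fin 2) ℂ) ^ γ * S)
    (hγ1 : γ = 1) :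
    β - α - 1 = 0 ∧
      ∀ Y₀ : ℂ, (eval2 S 0 Y₀ = 0 ↔ IsSingularPoint H (polyMap G (0, Y₀))) := by
  subst hγ1
  rw [pow_one] at hfac
  have hS : sliceAt 0 S ≠ 0 := by
    obtain ⟨y, hy⟩ := hS0
    contrapose! hy
    rw [← eval_sliceAt, hy, Polynomial.eval_zero]
  have hexp : β - α - 1 = 0 := by
    by_contra hne
    apply sliceAt_zero_jacDet_ne_zero hfac hS hzero
    simp [hdet, sliceAt_zero_X_zero, zero_pow hne]
  rw [hexp, pow_zero, mul_one] at hdet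
  exact ⟨hexp, eval2_eq_zero_iff_isSingularPoint hfac hc hdet⟩

/-- if `γ = 1` then `β - α - 1 = 0` and `S(0,Y₀) = 0` iff `G(0,Y₀)`
is a singular point of `{H = 0}`. -/
theorem gamma_eq_one_case (α β : ℕ) (hα : 1 ≤ α) (hβ1 : 1 ≤ β)
    (G : PolyPair) (c : ℂ) (hc : c ≠ 0)
    (hdet : jacDet G.1 G.2 = MvPolynomial.C c * (X 0 : MvPolynomial (Fin 2) ℂ) ^ (β - α - 1))
    (hβ : α + 1 ≤ β)
    (H : MvPolynomial (Fin 2) ℂ) (hH : Irreducible H)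
    (hzero : {p : ℂ × ℂ | eval2 H p.1 p.2 = 0} = {p : ℂ × ℂ | ∃ y : ℂ, p = polyMap G (0, y)})
    (γ : ℕ) (hγ : 1 ≤ γ) (S : MvPolynomial (Fin 2) ℂ)
    (hS0 : ∃ y : ℂ, eval2 S 0 y ≠ 0)
    (hfac : aeval ![G.1, G.2] H = (X 0 : MvPolynomial (Fin 2) ℂ) ^ γ * S)
    (hγ1 : γ = 1) :
    β - α - 1 = 0 ∧
      ∀ Y₀ : ℂ, (eval2 S 0 Y₀ = 0 ↔ IsSingularPoint H (polyMap G (0, Y₀))) :=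
  gamma_eq_one_case_general α β G c hc hdet H hzero γ S hS0 hfac hγ1
end

section
/- Let α ≥ 1 and β ≥ 1 be integers, let G = (G₁,G₂) ∈ ℂ[X,Y]² satisfy det J_G(X,Y) = c·X^{β−α−1} identically for some nonzero constant c ∈ ℂ (in particular β ≥ α+1), let H ∈ ℂ[U,V] be irreducible with zero set {(u,v) : H(u,v) = 0} = {G(0,y) : y ∈ ℂ}, let γ ≥ 1 be an integer and S ∈ ℂ[X,Y] with S(0,Y) ≢ 0 and H(G(X,Y)) = X^{γ}·S(X,Y), and assume that G₁(0,Y) is a nonconstant polynomial in Y. Then γ = β − α. -/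
open MvPolynomial Filter

/-!
Differentiating `H ∘ G = X^γ S` by the chain rule and solving for `(∂ᵤH) ∘ G` and
`(∂ᵥH) ∘ G` by Cramer's rule (the determinant being `c X^(β-α-1)`) gives
`c X^(β-α-1) (∂ᵤH ∘ G) = X^(γ-1) (γ S ∂_Y G₂ + X ⋯)` and
`c X^(β-α-1) (∂ᵥH ∘ G) = -X^(γ-1) (γ S ∂_Y G₁ + X ⋯)`.
If `γ < β - α`, the second identity restricted to `X = 0` gives
`γ S(0,Y) ∂_Y G₁(0,Y) = 0`, so `G₁(0,Y)` is constant. If `γ > β - α`, both partial derivatives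
of `H` vanish along `G(0,Y)`, which is all of `{H = 0}`; by the Nullstellensatz `H` divides
them, so they vanish (a nonzero `∂ᵢH` has smaller degree in the `i`-th variable than `H`) and
`H` is constant, contradicting irreducibility.
-/

namespace MvPolynomial

section PartialDerivatives

variable {R σ τ : Type*} [CommSemiring R]

theorem eval_aeval (r : τ → R) (g : σ → MvPolynomial τ R) (p : MvPolynomial σ R) :
    eval r (aeval g p) = eval (fun j => eval r (g j)) p := by
  induction p using MvPolynomial.induction_on <;> simp_all

theorem pderiv_aeval_s4 [Fintype σ] (g : σ → MvPolynomial τ R) (i : τ) (p : MvPolynomial σ R) :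
    pderiv i (aeval g p) = ∑ j, aeval g (pderiv j p) * pderiv i (g j) := by
  classical
  induction p using MvPolynomial.induction_on with
  | C a => simp
  | add p q hp hq => simp only [map_add, hp, hq, add_mul, Finset.sum_add_distrib]
  | mul_X p j hp =>
    simp only [map_mul, aeval_X, pderiv_mul, hp, pderiv_X, map_add, add_mul,
      Finset.sum_add_distrib, Finset.sum_mul, Pi.single_apply, mul_ite, mul_one, mul_zero,
      apply_ite (aeval g), map_zero, ite_mul, zero_mul, Finset.sum_ite_eq, Finset.mem_univ, if_true]
    congr 1
    exact Finset.sum_congr rfl fun _ _ => by ring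

theorem pderiv_X_pow_succ_mul (i : σ) (k : ℕ) (p : MvPolynomial σ R) :
    pderiv i (X i ^ (k + 1) * p) =
      X i ^ k * ((k + 1 : MvPolynomial σ R) * p + X i * pderiv i p) := by
  rw [pderiv_mul, pderiv_pow, pderiv_X_self]
  push_cast
  ring

theorem pderiv_X_pow_mul_of_ne {i j : σ} (h : i ≠ j) (k : ℕ) (p : MvPolynomial σ R) :
    pderiv j (X i ^ k * p) = X i ^ k * pderiv j p := by
  rw [pderiv_mul, pderiv_pow, pderiv_X_of_ne h]
  ring

variable {i : σ} {p : MvPolynomial σ R}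

theorem degreeOf_pderiv_lt (h : pderiv i p ≠ 0) : degreeOf i (pderiv i p) < degreeOf i p := by
  classical
  have hsucc : ∀ m ∈ (pderiv i p).support, m i + 1 ≤ degreeOf i p := fun m hm => by
    have hm' : m + Finsupp.single i 1 ∈ p.support := by
      rw [mem_support_iff, coeff_pderiv] at hm
      exact mem_support_iff.2 (left_ne_zero_of_mul hm)
    simpa using monomial_le_degreeOf i hm'
  obtain ⟨m, hm⟩ := support_nonempty.2 h
  rw [degreeOf_lt_iff (by have := hsucc m hm; omega)]
  exact fun m hm => hsucc m hm

theorem pderiv_eq_zero_of_dvd [NoZeroDivisors R] (h : p ∣ pderiv i p) : pderiv i p = 0 := by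
  by_contra hne
  obtain ⟨q, hq⟩ := h
  have hp : p ≠ 0 := by rintro rfl; simp at hne
  have hq0 : q ≠ 0 := by rintro rfl; simp_all
  have hlt := degreeOf_pderiv_lt hne
  rw [hq, degreeOf_mul_eq hp hq0] at hlt
  omega

theorem eq_C_of_forall_pderiv_eq_zero [IsAddTorsionFree R] (h : ∀ i, pderiv i p = 0) :
    p = C (coeff 0 p) := by
  classical
  ext n
  by_cases hn : n = 0
  · simp [hn]
  rw [coeff_C, if_neg (Ne.symm hn)]
  obtain ⟨i, hi⟩ : ∃ i, n i ≠ 0 := by simpa [Finsupp.ext_iff] using hn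
  have hle : Finsupp.single i 1 ≤ n := Finsupp.single_le_iff.2 (Nat.one_le_iff_ne_zero.2 hi)
  have hcoeff := congr_arg (coeff (n - Finsupp.single i 1)) (h i)
  rw [coeff_pderiv, tsub_add_cancel_of_le hle, coeff_zero] at hcoeff
  have hcast : (((n - Finsupp.single i 1 : σ →₀ ℕ) i : ℕ) : R) + 1 = (n i : R) := by
    rw [Finsupp.tsub_apply, Finsupp.single_eq_same]; norm_cast; congr 1; omega
  rw [hcast, mul_comm, ← nsmul_eq_mul] at hcoeff
  exact (nsmul_eq_zero_iff_right hi).1 hcoeff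

end PartialDerivatives

section Nullstellensatz

variable {k σ : Type*} [Field k] [IsAlgClosed k] [Finite σ]

theorem dvd_of_forall_eval_eq_zero {H P : MvPolynomial σ k} (hH : Prime H)
    (h : ∀ x, eval x H = 0 → eval x P = 0) : H ∣ P := by
  have : (Ideal.span {H}).IsPrime := (Ideal.span_singleton_prime hH.ne_zero).2 hH
  rw [← Ideal.mem_span_singleton, ← IsPrime.vanishingIdeal_zeroLocus (K := k) (Ideal.span {H}),
    zeroLocus_span]
  intro x hx
  simpa using h x (by simpa using hx)

theorem exists_eval_pderiv_ne_zero_of_irreducible [CharZero k] {H : MvPolynomial σ k}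
    (hH : Irreducible H) : ∃ x i, eval x H = 0 ∧ eval x (pderiv i H) ≠ 0 := by
  by_contra! h
  have hC := eq_C_of_forall_pderiv_eq_zero fun i =>
    pderiv_eq_zero_of_dvd (dvd_of_forall_eval_eq_zero hH.prime (h · i))
  rw [hC] at hH
  rcases eq_or_ne (coeff 0 H) 0 with h0 | h0
  · rw [h0, map_zero] at hH
    exact not_irreducible_zero hH
  · exact hH.not_isUnit (h0.isUnit.map C)

end Nullstellensatz

section RestrictFstZero

variable {R : Type*} [CommRing R]

noncomputable def restrictFstZero : MvPolynomial (Fin 2) R →ₐ[R] Polynomial R :=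
  aeval ![0, Polynomial.X]

@[simp]
theorem restrictFstZero_X_zero : restrictFstZero (X 0 : MvPolynomial (Fin 2) R) = 0 := by
  simp [restrictFstZero]

theorem eval_restrictFstZero (p : MvPolynomial (Fin 2) R) (y : R) :
    (restrictFstZero p).eval y = eval ![0, y] p := by
  induction p using MvPolynomial.induction_on with
  | C a => simp [restrictFstZero]
  | add p q hp hq => simp only [map_add, Polynomial.eval_add, hp, hq]
  | mul_X p j hp =>
    simp only [map_mul, Polynomial.eval_mul, hp]
    fin_cases j <;> simp [restrictFstZero]

theorem derivative_restrictFstZero (p : MvPolynomial (Fin 2) R) :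
    Polynomial.derivative (restrictFstZero p) = restrictFstZero (pderiv 1 p) := by
  induction p using MvPolynomial.induction_on with
  | C a => simp [restrictFstZero]
  | add p q hp hq => simp only [map_add, hp, hq]
  | mul_X p j hp =>
    simp only [map_mul, Polynomial.derivative_mul, hp, pderiv_mul, map_add]
    fin_cases j <;> simp [restrictFstZero, pderiv_X]

theorem restrictFstZero_eq_zero_of_X_pow_mul_eq [IsDomain R] {a b : ℕ}
    {u v : MvPolynomial (Fin 2) R} (hab : a < b) (h : X 0 ^ a * u = X 0 ^ b * v) :
    restrictFstZero u = 0 := by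
  obtain ⟨d, rfl⟩ := Nat.exists_eq_add_of_lt hab
  rw [add_assoc, pow_add, mul_assoc] at h
  rw [mul_left_cancel₀ (pow_ne_zero a (X_ne_zero 0)) h]
  simp

theorem restrictFstZero_pderiv_one_ne_zero [IsAddTorsionFree R] {p : MvPolynomial (Fin 2) R}
    (h : ∃ y₁ y₂, eval ![0, y₁] p ≠ eval ![0, y₂] p) :
    restrictFstZero (pderiv 1 p) ≠ 0 := by
  obtain ⟨y₁, y₂, hne⟩ := h
  intro h0
  rw [← derivative_restrictFstZero] at h0
  apply hne
  rw [← eval_restrictFstZero, ← eval_restrictFstZero, Polynomial.eq_C_of_derivative_eq_zero h0]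
  simp

end RestrictFstZero

end MvPolynomial

section Jacobian

theorem aeval_pderiv_zero_mul_jacDet (P Q H : MvPolynomial (Fin 2) ℂ) :
    aeval ![P, Q] (pderiv 0 H) * jacDet P Q =
      pderiv 0 (aeval ![P, Q] H) * pderiv 1 Q - pderiv 1 (aeval ![P, Q] H) * pderiv 0 Q := by
  simp only [jacDet, pderiv_aeval_s4, Fin.sum_univ_two, Matrix.cons_val_zero, Matrix.cons_val_one]
  ring

theorem aeval_pderiv_one_mul_jacDet (P Q H : MvPolynomial (Fin 2) ℂ) :
    aeval ![P, Q] (pderiv 1 H) * jacDet P Q =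
      pderiv 1 (aeval ![P, Q] H) * pderiv 0 P - pderiv 0 (aeval ![P, Q] H) * pderiv 1 P := by
  simp only [jacDet, pderiv_aeval_s4, Fin.sum_univ_two, Matrix.cons_val_zero, Matrix.cons_val_one]
  ring

variable {P Q H S : MvPolynomial (Fin 2) ℂ} {c : ℂ} {k m : ℕ}

theorem X_pow_mul_aeval_pderiv_zero_eq (hdet : jacDet P Q = C c * X 0 ^ m)
    (hfac : aeval ![P, Q] H = X 0 ^ (k + 1) * S) :
    X 0 ^ m * (C c * aeval ![P, Q] (pderiv 0 H)) =
      X 0 ^ k * (((k + 1 : MvPolynomial (Fin 2) ℂ) * S + X 0 * pderiv 0 S) * pderiv 1 Q -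
        X 0 * pderiv 1 S * pderiv 0 Q) := by
  have h := aeval_pderiv_zero_mul_jacDet P Q H
  rw [hdet, hfac, pderiv_X_pow_succ_mul, pderiv_X_pow_mul_of_ne (by decide)] at h
  linear_combination h

theorem X_pow_mul_aeval_pderiv_one_eq (hdet : jacDet P Q = C c * X 0 ^ m)
    (hfac : aeval ![P, Q] H = X 0 ^ (k + 1) * S) :
    X 0 ^ m * (C c * aeval ![P, Q] (pderiv 1 H)) =
      X 0 ^ k * (X 0 * pderiv 1 S * pderiv 0 P -
        ((k + 1 : MvPolynomial (Fin 2) ℂ) * S + X 0 * pderiv 0 S) * pderiv 1 P) := by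
  have h := aeval_pderiv_one_mul_jacDet P Q H
  rw [hdet, hfac, pderiv_X_pow_succ_mul, pderiv_X_pow_mul_of_ne (by decide)] at h
  linear_combination h

end Jacobian

theorem exists_restrictFstZero_aeval_pderiv_ne_zero {G : PolyPair} {H : MvPolynomial (Fin 2) ℂ}
    (hH : Irreducible H)
    (hzero : {p : ℂ × ℂ | eval2 H p.1 p.2 = 0} =
      {p : ℂ × ℂ | ∃ y : ℂ, p = polyMap G (0, y)}) :
    ∃ i, restrictFstZero (aeval ![G.1, G.2] (pderiv i H)) ≠ 0 := by
  obtain ⟨x, i, hx, hi⟩ := exists_eval_pderiv_ne_zero_of_irreducible hH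
  have hx_eq : ![x 0, x 1] = x := by funext j; fin_cases j <;> rfl
  have hx_mem : (x 0, x 1) ∈ {p : ℂ × ℂ | eval2 H p.1 p.2 = 0} := by
    simpa [eval2, hx_eq] using hx
  rw [hzero] at hx_mem
  obtain ⟨y, hy⟩ := hx_mem
  refine ⟨i, fun h0 => hi ?_⟩
  have hGy : (fun j => eval ![0, y] (![G.1, G.2] j)) = x := by
    rw [← hx_eq]
    simp only [polyMap, eval2, Prod.mk.injEq] at hy
    funext j; fin_cases j <;> simp [hy]
  rw [← hGy, ← eval_aeval, ← eval_restrictFstZero, h0, Polynomial.eval_zero]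

theorem gamma_eq_beta_sub_alpha_general (α β : ℕ)
    (G : PolyPair) (c : ℂ) (hc : c ≠ 0)
    (hdet : jacDet G.1 G.2 = MvPolynomial.C c * (X 0 : MvPolynomial (Fin 2) ℂ) ^ (β - α - 1))
    (hβ : α + 1 ≤ β)
    (H : MvPolynomial (Fin 2) ℂ) (hH : Irreducible H)
    (hzero : {p : ℂ × ℂ | eval2 H p.1 p.2 = 0} = {p : ℂ × ℂ | ∃ y : ℂ, p = polyMap G (0, y)})
    (γ : ℕ) (hγ : 1 ≤ γ) (S : MvPolynomial (Fin 2) ℂ)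
    (hS0 : ∃ y : ℂ, eval2 S 0 y ≠ 0)
    (hfac : aeval ![G.1, G.2] H = (X 0 : MvPolynomial (Fin 2) ℂ) ^ γ * S)
    (hG1 : ∃ y₁ y₂ : ℂ, eval2 G.1 0 y₁ ≠ eval2 G.1 0 y₂) :
    γ = β - α := by
  obtain ⟨k, rfl⟩ : ∃ k, γ = k + 1 := ⟨γ - 1, by omega⟩
  obtain ⟨m, hm⟩ : ∃ m, β - α = m + 1 := ⟨β - α - 1, by omega⟩
  rw [hm, Nat.add_sub_cancel] at hdet
  rw [hm, Nat.add_right_cancel_iff]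
  have hA := X_pow_mul_aeval_pderiv_zero_eq hdet hfac
  have hB := X_pow_mul_aeval_pderiv_one_eq hdet hfac
  rcases lt_trichotomy k m with hlt | rfl | hgt
  · have hS : restrictFstZero S ≠ 0 := by
      obtain ⟨y, hy⟩ := hS0
      exact fun h => hy (by rw [eval2, ← eval_restrictFstZero, h, Polynomial.eval_zero])
    have h0 := restrictFstZero_eq_zero_of_X_pow_mul_eq hlt hB.symm
    simp [hS, restrictFstZero_pderiv_one_ne_zero hG1, Nat.cast_add_one_ne_zero] at h0
  · rfl
  · obtain ⟨i, hi⟩ := exists_restrictFstZero_aeval_pderiv_ne_zero hH hzero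
    fin_cases i
    · exact absurd (by simpa [hc] using restrictFstZero_eq_zero_of_X_pow_mul_eq hgt hA) hi
    · exact absurd (by simpa [hc] using restrictFstZero_eq_zero_of_X_pow_mul_eq hgt hB) hi

/-- under the standing hypotheses, `γ = β - α`. -/
theorem gamma_eq_beta_sub_alpha (α β : ℕ) (hα : 1 ≤ α) (hβ1 : 1 ≤ β)
    (G : PolyPair) (c : ℂ) (hc : c ≠ 0)
    (hdet : jacDet G.1 G.2 = MvPolynomial.C c * (X 0 : MvPolynomial (Fin 2) ℂ) ^ (β - α - 1))
    (hβ : α + 1 ≤ β)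
    (H : MvPolynomial (Fin 2) ℂ) (hH : Irreducible H)
    (hzero : {p : ℂ × ℂ | eval2 H p.1 p.2 = 0} = {p : ℂ × ℂ | ∃ y : ℂ, p = polyMap G (0, y)})
    (γ : ℕ) (hγ : 1 ≤ γ) (S : MvPolynomial (Fin 2) ℂ)
    (hS0 : ∃ y : ℂ, eval2 S 0 y ≠ 0)
    (hfac : aeval ![G.1, G.2] H = (X 0 : MvPolynomial (Fin 2) ℂ) ^ γ * S)
    (hG1 : ∃ y₁ y₂ : ℂ, eval2 G.1 0 y₁ ≠ eval2 G.1 0 y₂) :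
    γ = β - α :=
  gamma_eq_beta_sub_alpha_general α β G c hc hdet hβ H hH hzero γ hγ S hS0 hfac hG1
end

section
/- Let α ≥ 1 and β ≥ α + 1 be integers, let G = (G₁,G₂) ∈ ℂ[X,Y]² satisfy det J_G(X,Y) = c·X^{β−α−1} identically for some nonzero constant c ∈ ℂ, and let H ∈ ℂ[U,V] and S ∈ ℂ[X,Y] satisfy H(G(X,Y)) = X^{β−α}·S(X,Y). Then for every Y₀ ∈ ℂ with S(0,Y₀) = 0, the point G(0,Y₀) is a singular point of the plane curve {H = 0}. -/
open MvPolynomial Filter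

lemma chain_rule (g : Fin 2 → MvPolynomial (Fin 2) ℂ) (p : MvPolynomial (Fin 2) ℂ) (i : Fin 2) :
    pderiv i (aeval g p) =
      aeval g (pderiv 0 p) * pderiv i (g 0) + aeval g (pderiv 1 p) * pderiv i (g 1) := by
  induction p using MvPolynomial.induction_on with
  | C a => simp
  | add p q hp hq => simp only [map_add, hp, hq]; ring
  | mul_X p j hp =>
      have hderiv : ∀ k : Fin 2, pderiv k (p * X j) =
          pderiv k p * X j + p * pderiv k (X j) := fun k => pderiv_mul
      simp only [map_mul, aeval_X, pderiv_mul, hp, hderiv, map_add, map_mul]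
      fin_cases j <;> simp <;> ring

lemma eval_aeval_pair (G : PolyPair) (x y : ℂ) (P : MvPolynomial (Fin 2) ℂ) :
    eval ![x, y] (aeval ![G.1, G.2] P) = eval2 P (eval2 G.1 x y) (eval2 G.2 x y) := by
  rw [aeval_def]
  have halg : algebraMap ℂ (MvPolynomial (Fin 2) ℂ) = C := rfl
  rw [halg, ← eval_assoc]
  unfold eval2
  have : (⇑(eval ![x, y]) ∘ ![G.1, G.2]) = ![eval ![x, y] G.1, eval ![x, y] G.2] := by
    funext i; fin_cases i <;> rfl
  rw [this]


/-- every zero `(0,Y₀)` of the phantom polynomial `S` maps to a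
singular point `G(0,Y₀)` of `{H = 0}`. -/
theorem phantom_meets_singR_gives_singular (α β : ℕ) (hα : 1 ≤ α) (hβ : α + 1 ≤ β)
    (G : PolyPair) (c : ℂ) (hc : c ≠ 0)
    (hdet : jacDet G.1 G.2 = MvPolynomial.C c * (X 0 : MvPolynomial (Fin 2) ℂ) ^ (β - α - 1))
    (H S : MvPolynomial (Fin 2) ℂ)
    (hfac : aeval ![G.1, G.2] H = (X 0 : MvPolynomial (Fin 2) ℂ) ^ (β - α) * S) :
    ∀ Y₀ : ℂ, eval2 S 0 Y₀ = 0 → IsSingularPoint H (polyMap G (0, Y₀)) := by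
  intro Y₀ hS0
  set k := β - α - 1 with hk
  have hm : β - α = k + 1 := by omega
  set g : Fin 2 → MvPolynomial (Fin 2) ℂ := ![G.1, G.2] with hg
  have hg0 : g 0 = G.1 := rfl
  have hg1 : g 1 = G.2 := rfl
  -- chain rules
  have c0 := chain_rule g H 0
  have c1 := chain_rule g H 1
  rw [hg0, hg1] at c0 c1
  -- derivatives of RHS
  have hX : (X 0 : MvPolynomial (Fin 2) ℂ) ≠ 0 := X_ne_zero 0
  have hXk : (X 0 : MvPolynomial (Fin 2) ℂ) ^ k ≠ 0 := pow_ne_zero _ hX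
  rw [hm] at hfac
  have d0 : pderiv 0 (aeval g H) =
      ((k + 1 : ℕ) : MvPolynomial (Fin 2) ℂ) * (X 0) ^ k * S + (X 0) ^ (k + 1) * pderiv 0 S := by
    rw [show aeval g H = aeval ![G.1, G.2] H from rfl, hfac, pderiv_mul, pderiv_pow]
    simp
  have d1 : pderiv 1 (aeval g H) = (X 0) ^ (k + 1) * pderiv 1 S := by
    rw [show aeval g H = aeval ![G.1, G.2] H from rfl, hfac, pderiv_mul, pderiv_pow]
    simp [pderiv_X_of_ne (show (0 : Fin 2) ≠ 1 by decide)]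
  -- jacDet unfolded
  have hdet' : pderiv 0 G.1 * pderiv 1 G.2 - pderiv 1 G.1 * pderiv 0 G.2
      = C c * (X 0) ^ k := hdet
  -- Cramer for pderiv 0 H
  have key0 : (X 0 : MvPolynomial (Fin 2) ℂ) ^ k * (C c * aeval g (pderiv 0 H)) =
      (X 0) ^ k * (((k + 1 : ℕ) : MvPolynomial (Fin 2) ℂ) * pderiv 1 G.2 * S
        + X 0 * (pderiv 1 G.2 * pderiv 0 S - pderiv 0 G.2 * pderiv 1 S)) := by
    have lhs : pderiv 1 G.2 * pderiv 0 (aeval g H) - pderiv 0 G.2 * pderiv 1 (aeval g H)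
        = (C c * (X 0) ^ k) * aeval g (pderiv 0 H) := by
      rw [c0, c1, ← hdet']; ring
    rw [d0, d1] at lhs
    rw [← mul_assoc, mul_comm ((X 0 : MvPolynomial (Fin 2) ℂ) ^ k) (C c), ← lhs]
    ring
  have key1 : (X 0 : MvPolynomial (Fin 2) ℂ) ^ k * (C c * aeval g (pderiv 1 H)) =
      (X 0) ^ k * (((k + 1 : ℕ) : MvPolynomial (Fin 2) ℂ) * (-(pderiv 1 G.1)) * S
        + X 0 * (pderiv 0 G.1 * pderiv 1 S - pderiv 1 G.1 * pderiv 0 S)) := by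
    have lhs : pderiv 0 G.1 * pderiv 1 (aeval g H) - pderiv 1 G.1 * pderiv 0 (aeval g H)
        = (C c * (X 0) ^ k) * aeval g (pderiv 1 H) := by
      rw [c0, c1, ← hdet']; ring
    rw [d0, d1] at lhs
    rw [← mul_assoc, mul_comm ((X 0 : MvPolynomial (Fin 2) ℂ) ^ k) (C c), ← lhs]
    ring
  have e0 := mul_left_cancel₀ hXk key0
  have e1 := mul_left_cancel₀ hXk key1
  -- now evaluate at ![0, Y₀]
  have heval : ∀ P, eval ![(0:ℂ), Y₀] (aeval g P)
      = eval2 P (eval2 G.1 0 Y₀) (eval2 G.2 0 Y₀) := fun P => eval_aeval_pair G 0 Y₀ P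
  have hX0 : eval ![(0:ℂ), Y₀] (X 0 : MvPolynomial (Fin 2) ℂ) = 0 := by simp
  have hSe : eval ![(0:ℂ), Y₀] S = 0 := hS0
  constructor
  · show eval2 H _ _ = 0
    simp only [polyMap]
    rw [← heval H, show aeval g H = aeval ![G.1, G.2] H from rfl, hfac]
    rw [map_mul, map_pow, hX0]
    simp
  constructor
  · show eval2 (pderiv 0 H) _ _ = 0
    simp only [polyMap]
    rw [← heval (pderiv 0 H)]
    have := congrArg (eval ![(0:ℂ), Y₀]) e0
    simp only [map_mul, map_add, map_sub, map_pow, map_natCast, eval_C, hX0, hSe,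
      mul_zero, zero_mul, add_zero] at this
    exact (mul_eq_zero.mp this).resolve_left hc
  · show eval2 (pderiv 1 H) _ _ = 0
    simp only [polyMap]
    rw [← heval (pderiv 1 H)]
    have := congrArg (eval ![(0:ℂ), Y₀]) e1
    simp only [map_mul, map_add, map_sub, map_neg, map_pow, map_natCast, eval_C, hX0, hSe,
      mul_zero, zero_mul, add_zero] at this
    exact (mul_eq_zero.mp this).resolve_left hc
end

section
/- Let F = (P,Q) ∈ ℂ[X,Y]² be a Keller mapping, let α ≥ 1 and β be integers with β − α − 1 > 0, let Φ ∈ ℂ[X] with deg Φ < α + β and X^{α} dividing Φ, let G ∈ ℂ[X,Y]² be the R-dual of F, let H ∈ ℂ[U,V] be irreducible with zero set {(u,v) : H(u,v) = 0} = {G(0,y) : y ∈ ℂ}, and let S ∈ ℂ[X,Y] satisfy S(0,Y) ≢ 0 and H(G(X,Y)) = X^{β−α}·S(X,Y). Write H∘F ∈ ℂ[U,V] for the polynomial H(P(U,V),Q(U,V)). Then S(0,y) ≠ 0 for every y ∈ ℂ if and only if there exists h₆ ∈ ℂ[X,Y] such that x^{α−1}·(∂(H∘F)/∂V)(x^{−α},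 x^{β}y + x^{−α}Φ(x)) = h₆(x,y) for all x ≠ 0 and all y ∈ ℂ. -/
open MvPolynomial Filter

/- ### Auxiliary lemmas -/

lemma mv_aeval_eq_eval (f : Fin 2 → ℂ) (p : MvPolynomial (Fin 2) ℂ) : aeval f p = eval f p := by
  rw [← coe_aeval_eq_eval]; rfl

lemma poly_aeval_eq_eval (t : ℂ) (p : Polynomial ℂ) :
    Polynomial.aeval t p = Polynomial.eval t p := by
  simp [Polynomial.aeval_def, Polynomial.eval₂_eq_eval_map]

lemma eval_aeval_mv (u v : ℂ) (g : Fin 2 → MvPolynomial (Fin 2) ℂ) (A : MvPolynomial (Fin 2) ℂ) :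
    eval ![u, v] (aeval g A) = eval (fun i => eval ![u, v] (g i)) A := by
  have h := MvPolynomial.comp_aeval_apply (R := ℂ) (f := g)
    (φ := (MvPolynomial.aeval ![u, v] : MvPolynomial (Fin 2) ℂ →ₐ[ℂ] ℂ)) (p := A)
  simp only [mv_aeval_eq_eval] at h
  exact h

lemma eval_aeval_poly (t : ℂ) (f : Fin 2 → Polynomial ℂ) (A : MvPolynomial (Fin 2) ℂ) :
    Polynomial.eval t (aeval f A) = eval (fun i => Polynomial.eval t (f i)) A := by
  have h := MvPolynomial.comp_aeval_apply (R := ℂ) (f := f)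
    (φ := (Polynomial.aeval t : Polynomial ℂ →ₐ[ℂ] ℂ)) (p := A)
  simp only [poly_aeval_eq_eval, mv_aeval_eq_eval] at h
  exact h

lemma chainRule (f : Fin 2 → Polynomial ℂ) (A : MvPolynomial (Fin 2) ℂ) :
    Polynomial.derivative (aeval f A) =
      aeval f (pderiv 0 A) * Polynomial.derivative (f 0) +
      aeval f (pderiv 1 A) * Polynomial.derivative (f 1) := by
  induction A using MvPolynomial.induction_on with
  | C a => simp
  | add p q hp hq => simp only [map_add, hp, hq]; ring
  | mul_X p i hp =>
    rw [map_mul, aeval_X, Polynomial.derivative_mul, hp]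
    rw [pderiv_mul, pderiv_mul]
    fin_cases i <;> simp [pderiv_X] <;> ring

lemma X0_dvd_sub (q : MvPolynomial (Fin 2) ℂ) :
    (X 0 : MvPolynomial (Fin 2) ℂ) ∣ (q - aeval ![0, X 1] q) := by
  induction q using MvPolynomial.induction_on with
  | C a => simp
  | add p q hp hq =>
    have := dvd_add hp hq
    rw [map_add]
    convert this using 1; ring
  | mul_X p i hp =>
    rw [map_mul, aeval_X]
    fin_cases i <;>
      simp only [Fin.zero_eta, Fin.mk_one, Matrix.cons_val_zero, Matrix.cons_val_one,
        Matrix.head_cons]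
    · rw [mul_zero, sub_zero]
      exact Dvd.dvd.mul_left (dvd_refl _) p
    · rw [show p * X 1 - aeval ![0, X 1] p * X 1 = (p - aeval ![0, X 1] p) * X 1 from by ring]
      exact hp.mul_right _

lemma X0_dvd_of_eval_zero (q : MvPolynomial (Fin 2) ℂ)
    (h : ∀ y : ℂ, eval ![0, y] q = 0) : (X 0 : MvPolynomial (Fin 2) ℂ) ∣ q := by
  have hz : aeval (![0, X 1] : Fin 2 → MvPolynomial (Fin 2) ℂ) q = 0 := by
    apply MvPolynomial.funext
    intro v
    have hv : v = ![v 0, v 1] := by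
      funext i; fin_cases i <;> rfl
    rw [hv, eval_aeval_mv]
    rw [show (fun i => eval ![v 0, v 1] ((![0, X 1] : Fin 2 → MvPolynomial (Fin 2) ℂ) i))
        = ![(0:ℂ), v 1] from by funext i; fin_cases i <;> simp]
    simp [h (v 1)]
  have := X0_dvd_sub q
  rwa [hz, sub_zero] at this

/-- The 1-variable polynomial `Y ↦ S(0,Y)`. -/
noncomputable def slice0 (S : MvPolynomial (Fin 2) ℂ) : Polynomial ℂ :=
  aeval ![Polynomial.C 0, Polynomial.X] S

lemma slice0_eval (S : MvPolynomial (Fin 2) ℂ) (y : ℂ) :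
    Polynomial.eval y (slice0 S) = eval2 S 0 y := by
  rw [slice0, eval_aeval_poly, eval2]
  have h1 : (fun i => Polynomial.eval y
      ((![Polynomial.C 0, Polynomial.X] : Fin 2 → Polynomial ℂ) i)) = ![(0:ℂ), y] := by
    funext i; fin_cases i <;> simp
  rw [h1]

lemma slice0_derivative (S : MvPolynomial (Fin 2) ℂ) :
    Polynomial.derivative (slice0 S) = slice0 (pderiv 1 S) := by
  rw [slice0, chainRule]
  simp [slice0]

/-- the phantom curve misses `sing(R)` iff
`x^{α-1}·(∂(H∘F)/∂V)∘R` extends to a polynomial `h₆`. -/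
theorem phantom_misses_iff_polynomial_extension
    (F : PolyPair) (hK : IsKeller F)
    (α β : ℕ) (hα : 1 ≤ α) (hβ : α + 1 < β)
    (Φ : Polynomial ℂ) (hΦdeg : Φ.natDegree < α + β) (hΦdvd : Polynomial.X ^ α ∣ Φ)
    (G : PolyPair) (hG : IsRDual F G α β Φ)
    (H : MvPolynomial (Fin 2) ℂ) (hH : Irreducible H)
    (hzero : {p : ℂ × ℂ | eval2 H p.1 p.2 = 0} = {p : ℂ × ℂ | ∃ y : ℂ, p = polyMap G (0, y)})
    (S : MvPolynomial (Fin 2) ℂ) (hS0 : ∃ y : ℂ, eval2 S 0 y ≠ 0)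
    (hfac : aeval ![G.1, G.2] H = (X 0 : MvPolynomial (Fin 2) ℂ) ^ (β - α) * S) :
    (∀ y : ℂ, eval2 S 0 y ≠ 0) ↔
      ∃ h₆ : MvPolynomial (Fin 2) ℂ, ∀ x : ℂ, x ≠ 0 → ∀ y : ℂ,
        x ^ (α - 1) *
          eval2 (pderiv 1 (aeval ![F.1, F.2] H))
            (x ^ α)⁻¹ (x ^ β * y + (x ^ α)⁻¹ * Polynomial.eval x Φ) =
        eval2 h₆ x y := by
  set HF := aeval ![F.1, F.2] H with hHF
  set HG := aeval ![G.1, G.2] H with hHG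
  -- ∂/∂Y of H∘G
  have hpdHG : pderiv 1 HG = (X 0 : MvPolynomial (Fin 2) ℂ) ^ (β - α) * pderiv 1 S := by
    rw [hfac, pderiv_mul, pderiv_pow]
    simp [pderiv_X]
  -- Key identity:  x^α · (∂(H∘F)/∂V)(R(x,y)) = (∂S/∂Y)(x,y)  for x ≠ 0
  have keyA : ∀ x : ℂ, x ≠ 0 → ∀ y : ℂ,
      x ^ α * eval2 (pderiv 1 HF) (x ^ α)⁻¹ (x ^ β * y + (x ^ α)⁻¹ * Polynomial.eval x Φ)
        = eval2 (pderiv 1 S) x y := by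
    intro x hx y
    set u : ℂ := (x ^ α)⁻¹ with hu
    set c : ℂ := (x ^ α)⁻¹ * Polynomial.eval x Φ with hc
    set f : Fin 2 → Polynomial ℂ :=
      ![Polynomial.C u, Polynomial.C (x ^ β) * Polynomial.X + Polynomial.C c] with hf
    set g : Fin 2 → Polynomial ℂ := ![Polynomial.C x, Polynomial.X] with hg
    have hfi : ∀ t : ℂ, (fun i => Polynomial.eval t (f i)) = ![u, x ^ β * t + c] := by
      intro t; funext i; fin_cases i <;> simp [hf]
    have hgi : ∀ t : ℂ, (fun i => Polynomial.eval t (g i)) = ![x, t] := by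
      intro t; funext i; fin_cases i <;> simp [hg]
    have hfg : aeval f HF = aeval g HG := by
      apply Polynomial.funext
      intro t
      rw [eval_aeval_poly, eval_aeval_poly, hfi, hgi, hHF, hHG,
        eval_aeval_mv, eval_aeval_mv]
      have h1 : (fun i => eval ![u, x ^ β * t + c] ((![F.1, F.2] : Fin 2 → _) i))
          = ![eval2 F.1 u (x ^ β * t + c), eval2 F.2 u (x ^ β * t + c)] := by
        funext i; fin_cases i <;> simp [eval2]
      have h2 : (fun i => eval ![x, t] ((![G.1, G.2] : Fin 2 → _) i))
          = ![eval2 G.1 x t, eval2 G.2 x t] := by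
        funext i; fin_cases i <;> simp [eval2]
      rw [h1, h2]
      have := hG x hx t
      simp only [polyMap, Prod.mk.injEq] at this
      rw [this.1, this.2]
    have hder := congrArg Polynomial.derivative hfg
    rw [chainRule, chainRule] at hder
    have hderf0 : Polynomial.derivative (f 0) = 0 := by simp [hf]
    have hderf1 : Polynomial.derivative (f 1) = Polynomial.C (x ^ β) := by
      simp [hf, ← map_pow]
    have hderg0 : Polynomial.derivative (g 0) = 0 := by simp [hg]
    have hderg1 : Polynomial.derivative (g 1) = 1 := by simp [hg]
    rw [hderf0, hderf1, hderg0, hderg1, mul_zero, zero_add, mul_zero, zero_add, mul_one] at hder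
    have heval := congrArg (Polynomial.eval y) hder
    rw [Polynomial.eval_mul, Polynomial.eval_C, eval_aeval_poly, eval_aeval_poly,
      hfi, hgi] at heval
    -- rewrite into eval2 form
    have hL : eval ![u, x ^ β * y + c] (pderiv 1 HF)
        = eval2 (pderiv 1 HF) u (x ^ β * y + c) := rfl
    have hR : eval ![x, y] (pderiv 1 HG) = eval2 (pderiv 1 HG) x y := rfl
    rw [hL, hR] at heval
    have hRval : eval2 (pderiv 1 HG) x y = x ^ (β - α) * eval2 (pderiv 1 S) x y := by
      rw [hpdHG, eval2]
      simp [eval2]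
    rw [hRval] at heval
    -- heval : eval2 (pderiv 1 HF) u (x^β y + c) * x^β = x^(β-α) * eval2 (pderiv 1 S) x y
    have hxb : (x : ℂ) ^ β = x ^ (β - α) * x ^ α := by
      rw [← pow_add]; congr 1; omega
    have hne : (x : ℂ) ^ (β - α) ≠ 0 := pow_ne_zero _ hx
    apply mul_left_cancel₀ hne
    rw [← heval, hxb]
    ring
  constructor
  · -- forward
    intro h
    have hzero' : ∀ y : ℂ, eval ![0, y] (pderiv 1 S) = 0 := by
      have hdeg : (slice0 S).natDegree = 0 := by
        by_contra hd
        obtain ⟨z, hz⟩ := Complex.exists_root (Polynomial.natDegree_pos_iff_degree_pos.mp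
          (Nat.pos_of_ne_zero hd))
        exact h z (by rw [← slice0_eval]; exact hz)
      have : Polynomial.derivative (slice0 S) = 0 := by
        rw [Polynomial.eq_C_of_natDegree_eq_zero hdeg]
        simp
      rw [slice0_derivative] at this
      intro y
      have := congrArg (Polynomial.eval y) this
      rw [slice0_eval] at this
      simpa [eval2] using this
    obtain ⟨h₆, hh⟩ := X0_dvd_of_eval_zero _ hzero'
    refine ⟨h₆, fun x hx y => ?_⟩
    have hA := keyA x hx y
    rw [hh] at hA
    have hA' : x ^ α *
        eval2 (pderiv 1 HF) (x ^ α)⁻¹ (x ^ β * y + (x ^ α)⁻¹ * Polynomial.eval x Φ)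
        = x * eval2 h₆ x y := by
      rw [hA, eval2, eval2]
      simp
    have hxa : (x : ℂ) ^ α = x * x ^ (α - 1) := by
      rw [← pow_succ']; congr 1; omega
    apply mul_left_cancel₀ hx
    rw [← hA', hxa]
    ring
  · -- backward
    rintro ⟨h₆, hh⟩ y
    have h0 : ∀ y : ℂ, eval ![0, y] (pderiv 1 S) = 0 := by
      intro y
      set a : Polynomial ℂ := aeval ![Polynomial.X, Polynomial.C y] (pderiv 1 S) with ha
      set b : Polynomial ℂ :=
        Polynomial.X * aeval ![Polynomial.X, Polynomial.C y] h₆ with hb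
      have heq : ∀ x : ℂ, x ≠ 0 → Polynomial.eval x a = Polynomial.eval x b := by
        intro x hx
        have h1 : (fun i => Polynomial.eval x
            ((![Polynomial.X, Polynomial.C y] : Fin 2 → Polynomial ℂ) i)) = ![x, y] := by
          funext i; fin_cases i <;> simp
        have hA := keyA x hx y
        have hB := hh x hx y
        rw [ha, hb, Polynomial.eval_mul, Polynomial.eval_X, eval_aeval_poly, eval_aeval_poly, h1]
        have hL : eval ![x, y] (pderiv 1 S) = eval2 (pderiv 1 S) x y := rfl
        have hR : eval ![x, y] h₆ = eval2 h₆ x y := rfl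
        rw [hL, hR, ← hA, ← hB]
        have hxa : (x : ℂ) ^ α = x * x ^ (α - 1) := by
          rw [← pow_succ']; congr 1; omega
        rw [hxa]; ring
      have hab : a = b := by
        have hroots : {x : ℂ | x ≠ 0} ⊆ {x : ℂ | (a - b).IsRoot x} := by
          intro x hx
          simp only [Set.mem_setOf_eq, Polynomial.IsRoot.def, Polynomial.eval_sub,
            sub_eq_zero]
          exact heq x hx
        have hinf : {x : ℂ | (a - b).IsRoot x}.Infinite :=
          Set.Infinite.mono hroots ((Set.finite_singleton (0 : ℂ)).infinite_compl)
        have := Polynomial.eq_zero_of_infinite_isRoot _ hinf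
        exact sub_eq_zero.mp this
      have := congrArg (Polynomial.eval 0) hab
      rw [ha, hb, Polynomial.eval_mul, Polynomial.eval_X, zero_mul, eval_aeval_poly] at this
      have h1 : (fun i => Polynomial.eval 0
          ((![Polynomial.X, Polynomial.C y] : Fin 2 → Polynomial ℂ) i)) = ![(0:ℂ), y] := by
        funext i; fin_cases i <;> simp
      rwa [h1] at this
    have hds : Polynomial.derivative (slice0 S) = 0 := by
      rw [slice0_derivative]
      apply Polynomial.funext
      intro t
      rw [slice0_eval]
      simpa [eval2] using h0 t
    have hdeg := Polynomial.natDegree_eq_zero_of_derivative_eq_zero hds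
    have hc := Polynomial.eq_C_of_natDegree_eq_zero hdeg
    obtain ⟨y₀, hy₀⟩ := hS0
    have hcy : ∀ z : ℂ, eval2 S 0 z = (slice0 S).coeff 0 := by
      intro z
      rw [← slice0_eval, hc]
      simp
    rw [hcy y, ← hcy y₀]
    exact hy₀
end

section
/- Let α ≥ 1 and β ≥ 0 be integers, let φ ∈ ℂ[X] with deg φ < α + β, let F ∈ ℂ[X,Y]² be a polynomial mapping, and let G ∈ ℂ[X,Y]² be the R-dual of F. Then deg G ≤ (β + 1)·deg F. -/
open MvPolynomial Filter

/-!
Write `w = x ^ α` and `s = x ^ (α + β) * y + φ(x)`, so that `R(x, y) = (w⁻¹, w⁻¹ * s)`.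
For a component `P` of `F` with `deg P ≤ d`, clearing denominators gives
`x ^ (α * d) * P(R(x, y)) = Pʰ(1, s, w)`, where `Pʰ` is the degree-`d` homogenization of `P`.
The monomial `xⁱ yʲ` of `P` becomes `w ^ (d - i - j) * s ^ j`, of `x`-degree at most
`α * (d - i - j) + (α + β) * j ≤ (α + β) * d` (this is where `deg φ < α + β` enters) and of
`y`-degree at most `d`. Dividing by `x ^ (α * d)`, the corresponding component of `G` has
`x`-degree at most `β * d` and `y`-degree at most `d`.
-/

namespace MvPolynomial

variable {σ R K : Type*}

section CommSemiring

variable [CommSemiring R]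

theorem totalDegree_le_sum_degreeOf [Fintype σ] (p : MvPolynomial σ R) :
    p.totalDegree ≤ ∑ i, p.degreeOf i := by
  classical
  calc p.totalDegree ≤ Multiset.card p.degrees := totalDegree_le_degrees_card p
    _ = ∑ i, p.degreeOf i := by
      simp only [degreeOf_def]
      exact (Multiset.sum_count_eq_card fun i _ => Finset.mem_univ i).symm

theorem degreeOf_aeval_le (i : σ) (q : MvPolynomial σ R) (p : Polynomial R) :
    degreeOf i (Polynomial.aeval q p) ≤ p.natDegree * degreeOf i q := by
  rw [Polynomial.aeval_eq_sum_range]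
  refine (degreeOf_sum_le _ _ _).trans (Finset.sup_le fun k hk => ?_)
  rw [smul_eq_C_mul]
  calc degreeOf i (C (p.coeff k) * q ^ k) ≤ degreeOf i (q ^ k) := degreeOf_C_mul_le _ _ _
    _ ≤ k * degreeOf i q := degreeOf_pow_le _ _ _
    _ ≤ p.natDegree * degreeOf i q :=
      Nat.mul_le_mul_right _ (Nat.lt_succ_iff.mp (Finset.mem_range.mp hk))

theorem add_le_totalDegree_of_mem_support {p : MvPolynomial (Fin 2) R} {m : Fin 2 →₀ ℕ}
    (hm : m ∈ p.support) : m 0 + m 1 ≤ p.totalDegree := by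
  simpa [Finsupp.sum_fintype, Fin.sum_univ_two] using le_totalDegree hm

/-- `Pʰ(1, S, W)` for the degree-`d` homogenization `Pʰ` of `P`. -/
noncomputable def scaledSubst (d : ℕ) (W S P : MvPolynomial (Fin 2) R) : MvPolynomial (Fin 2) R :=
  ∑ m ∈ P.support, C (coeff m P) * W ^ (d - (m 0 + m 1)) * S ^ m 1

theorem degreeOf_scaledSubst_le {d : ℕ} {P : MvPolynomial (Fin 2) R} (hP : P.totalDegree ≤ d)
    (W S : MvPolynomial (Fin 2) R) (i : Fin 2) :
    degreeOf i (scaledSubst d W S P) ≤ d * max (degreeOf i W) (degreeOf i S) := by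
  refine (degreeOf_sum_le _ _ _).trans (Finset.sup_le fun m hm => ?_)
  have hmd := (add_le_totalDegree_of_mem_support hm).trans hP
  set M := max (degreeOf i W) (degreeOf i S)
  calc degreeOf i (C (coeff m P) * W ^ (d - (m 0 + m 1)) * S ^ m 1)
      ≤ degreeOf i (W ^ (d - (m 0 + m 1))) + degreeOf i (S ^ m 1) :=
        (degreeOf_mul_le _ _ _).trans (Nat.add_le_add_right (degreeOf_C_mul_le _ _ _) _)
    _ ≤ (d - (m 0 + m 1)) * M + m 1 * M :=
        Nat.add_le_add ((degreeOf_pow_le _ _ _).trans (Nat.mul_le_mul_left _ (le_max_left _ _)))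
          ((degreeOf_pow_le _ _ _).trans (Nat.mul_le_mul_left _ (le_max_right _ _)))
    _ ≤ d * M := by rw [← add_mul]; exact Nat.mul_le_mul_right _ (by omega)

end CommSemiring

theorem eval_scaledSubst [Field K] {d : ℕ} {P : MvPolynomial (Fin 2) K} (hP : P.totalDegree ≤ d)
    (W S : MvPolynomial (Fin 2) K) {v : Fin 2 → K} (hW : eval v W ≠ 0) :
    eval v (scaledSubst d W S P) =
      eval v W ^ d * eval ![(eval v W)⁻¹, (eval v W)⁻¹ * eval v S] P := by
  rw [scaledSubst, map_sum, eval_eq' _ P, Finset.mul_sum]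
  refine Finset.sum_congr rfl fun m hm => ?_
  obtain ⟨k, hk⟩ := Nat.exists_eq_add_of_le ((add_le_totalDegree_of_mem_support hm).trans hP)
  simp only [hk, Nat.add_sub_cancel_left, map_mul, map_pow, eval_C, Fin.prod_univ_two,
    Matrix.cons_val_zero, Matrix.cons_val_one, mul_pow, inv_pow]
  field_simp
  ring

theorem eq_of_eval_eq_of_ne_zero [CommRing R] [IsDomain R] [Infinite R]
    {p q : MvPolynomial σ R} (i : σ) (h : ∀ v : σ → R, v i ≠ 0 → eval v p = eval v q) :
    p = q :=
  mul_left_cancel₀ (X_ne_zero i) <| funext fun v => by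
    by_cases hv : v i = 0 <;> simp [hv, h]

end MvPolynomial

section Dual

variable {K : Type*} [Field K] {α β d : ℕ} {φ : Polynomial K} {P G : MvPolynomial (Fin 2) K}

theorem mul_X_pow_eq_scaledSubst_of_eval_eq_dual [Infinite K] (hP : P.totalDegree ≤ d)
    (hG : ∀ x : K, x ≠ 0 → ∀ y : K,
      eval ![x, y] G = eval ![(x ^ α)⁻¹, x ^ β * y + (x ^ α)⁻¹ * φ.eval x] P) :
    G * X 0 ^ (α * d) =
      scaledSubst d (X 0 ^ α) (X 0 ^ (α + β) * X 1 + φ.toMvPolynomial 0) P := by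
  refine eq_of_eval_eq_of_ne_zero 0 fun v hv => ?_
  have hW : eval v (X 0 ^ α) ≠ 0 := by simpa using pow_ne_zero α hv
  have hv' : v = ![v 0, v 1] := by ext i; fin_cases i <;> rfl
  rw [eval_scaledSubst hP _ _ hW, map_mul, hv', hG _ hv]
  simp only [map_mul, map_add, map_pow, eval_X, Matrix.cons_val_zero, Matrix.cons_val_one,
    eval_toMvPolynomial]
  have hRsnd : (v 0 ^ α)⁻¹ * (v 0 ^ (α + β) * v 1 + φ.eval (v 0)) =
      v 0 ^ β * v 1 + (v 0 ^ α)⁻¹ * φ.eval (v 0) := by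
    rw [pow_add]
    field_simp
  rw [hRsnd, ← pow_mul, mul_comm]

theorem totalDegree_le_of_eval_eq_dual [Infinite K] (hφ : φ.natDegree ≤ α + β)
    (hP : P.totalDegree ≤ d)
    (hG : ∀ x : K, x ≠ 0 → ∀ y : K,
      eval ![x, y] G = eval ![(x ^ α)⁻¹, x ^ β * y + (x ^ α)⁻¹ * φ.eval x] P) :
    G.totalDegree ≤ (β + 1) * d := by
  have hcleared := mul_X_pow_eq_scaledSubst_of_eval_eq_dual hP hG
  set Φ : MvPolynomial (Fin 2) K := φ.toMvPolynomial 0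
  set S : MvPolynomial (Fin 2) K := X 0 ^ (α + β) * X 1 + Φ
  have hS0 : degreeOf 0 S ≤ α + β := by
    refine (degreeOf_add_le _ _ _).trans (max_le ?_ ?_)
    · simpa [degreeOf_X_of_ne] using
        degreeOf_mul_le 0 (X 0 ^ (α + β) : MvPolynomial (Fin 2) K) (X 1)
    · exact (degreeOf_aeval_le 0 (X 0) φ).trans (by simpa using hφ)
  have hS1 : degreeOf 1 S ≤ 1 := by
    refine (degreeOf_add_le _ _ _).trans (max_le ?_ ?_)
    · simpa [degreeOf_X_pow_of_ne] using
        degreeOf_mul_le 1 (X 0 ^ (α + β) : MvPolynomial (Fin 2) K) (X 1)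
    · exact (degreeOf_aeval_le 1 (X 0) φ).trans (by simp [degreeOf_X_of_ne])
  rcases eq_or_ne G 0 with rfl | hG0
  · simp
  have h0 : degreeOf 0 G + α * d ≤ d * (α + β) := by
    rw [← degreeOf_mul_X_self_pow_eq_add_of_ne_zero 0 _ hG0, hcleared]
    exact (degreeOf_scaledSubst_le hP _ S 0).trans
      (Nat.mul_le_mul_left _ (max_le (by simp) hS0))
  have h1 : degreeOf 1 G ≤ d := by
    rw [← degreeOf_mul_X_pow_of_ne (α * d) (by decide : (1 : Fin 2) ≠ 0), hcleared]
    refine (degreeOf_scaledSubst_le hP _ S 1).trans ?_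
    simpa [degreeOf_X_pow_of_ne] using Nat.mul_le_mul_left d hS1
  calc G.totalDegree ≤ degreeOf 0 G + degreeOf 1 G := by
        simpa [Fin.sum_univ_two] using totalDegree_le_sum_degreeOf G
    _ ≤ (β + 1) * d := by nlinarith

end Dual

theorem degree_of_dual_general (α β : ℕ)
    (φ : Polynomial ℂ) (hφ : φ.natDegree < α + β)
    (F G : PolyPair) (hG : IsRDual F G α β φ) :
    max G.1.totalDegree G.2.totalDegree ≤
      (β + 1) * max F.1.totalDegree F.2.totalDegree := by
  simp only [IsRDual, polyMap, eval2, Prod.mk.injEq] at hG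
  exact max_le
    (totalDegree_le_of_eval_eq_dual hφ.le (le_max_left _ _) fun x hx y => (hG x hx y).1)
    (totalDegree_le_of_eval_eq_dual hφ.le (le_max_right _ _) fun x hx y => (hG x hx y).2)

/-- the degree of the `R`-dual satisfies `deg G ≤ (β + 1)·deg F`. -/
theorem degree_of_dual (α β : ℕ) (hα : 1 ≤ α)
    (φ : Polynomial ℂ) (hφ : φ.natDegree < α + β)
    (F G : PolyPair) (hG : IsRDual F G α β φ) :
    max G.1.totalDegree G.2.totalDegree ≤
      (β + 1) * max F.1.totalDegree F.2.totalDegree :=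
  degree_of_dual_general α β φ hφ F G hG
end

section
/- Let F ∈ ℂ[X,Y]² be a Keller mapping. If (a,b) ∈ ℂ² ∖ F(ℂ²), then (a,b) is a limiting value of F at infinity: there exists a sequence (zₙ) of points of ℂ² with ‖zₙ‖ → ∞ and F(zₙ) → (a,b). In other words, every Picard exceptional value of a Keller mapping is a limiting value of the mapping along points tending to infinity. -/
open MvPolynomial Filter

/-!
The Keller condition forces `F = (P, Q)` to have dense image. Fix `a`, an irreducible factor `f`
of `P - a` and the domain `R = ℂ[X,Y]/(f)`. If `Q` avoided an uncountable set `S` on the curve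
`f = 0`, the Nullstellensatz would make `Q - t` a unit of `R` for every `t ∈ S`; as `R` has
countable dimension over `ℂ`, the inverses `(Q - t)⁻¹` are linearly dependent, so `Q` is algebraic
over `ℂ` in `R`, i.e. `Q ≡ r` modulo `f`. Then `f` divides both `P - a` and `Q - r`, so the Jacobian
determinant vanishes on the nonempty curve `f = 0`. Finally, a point of the closure of the image
that is not in the image can only be approached along sequences leaving every compact set.
-/

universe u v

open Cardinal Topology

theorem isAlgebraic_of_isUnit_sub_algebraMap {k : Type u} {A : Type v} [Field k] [CommRing A]
    [IsDomain A] [Algebra k A] {q : A} {S : Set k} (hS : lift.{u} (Module.rank k A) < lift.{v} #S)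
    (hunit : ∀ t ∈ S, IsUnit (q - algebraMap k A t)) : IsAlgebraic k q := by
  by_contra htr
  let K := FractionRing A
  have hq : Transcendental k (algebraMap A K q) :=
    (transcendental_algebraMap_iff (IsFractionRing.injective A K)).2 htr
  let v : S → A := fun t => ↑(hunit t t.2).unit⁻¹
  have hv : (IsScalarTower.toAlgHom k A K).toLinearMap ∘ v =
      (fun a => (algebraMap A K q - algebraMap k K a)⁻¹) ∘ Subtype.val := by
    funext t
    refine eq_inv_of_mul_eq_one_left ?_
    simp only [Function.comp_apply, AlgHom.toLinearMap_apply, IsScalarTower.coe_toAlgHom',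
      IsScalarTower.algebraMap_apply k A K, ← map_sub, ← map_mul, v]
    rw [IsUnit.val_inv_mul, map_one]
  have hli : LinearIndependent k v :=
    .of_comp _ (hv ▸ hq.linearIndependent_sub_inv.comp _ Subtype.val_injective)
  exact hS.not_ge hli.cardinal_lift_le_rank

theorem IsAlgClosed.exists_eq_algebraMap_of_isAlgebraic {k A : Type*} [Field k] [IsAlgClosed k]
    [CommRing A] [IsDomain A] [Algebra k A] {x : A} (hx : IsAlgebraic k x) :
    ∃ r : k, x = algebraMap k A r := by
  have hint := hx.isIntegral
  have hdeg := IsAlgClosed.degree_eq_one_of_irreducible k (minpoly.irreducible hint)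
  refine ⟨-(minpoly k x).coeff 0, ?_⟩
  have := minpoly.aeval k x
  rw [Polynomial.eq_X_add_C_of_degree_eq_one hdeg, (minpoly.monic hint).leadingCoeff,
    Polynomial.C_1, one_mul, map_add, Polynomial.aeval_X, Polynomial.aeval_C] at this
  rw [map_neg, eq_neg_iff_add_eq_zero, this]

namespace MvPolynomial

variable {σ k : Type*} [Field k]

theorem rank_quotient_le_aleph0 [Countable σ] (I : Ideal (MvPolynomial σ k)) :
    Module.rank k (MvPolynomial σ k ⧸ I) ≤ ℵ₀ :=
  calc Module.rank k (MvPolynomial σ k ⧸ I)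
      ≤ Module.rank k (MvPolynomial σ k) :=
        LinearMap.rank_le_of_surjective (Ideal.Quotient.mkₐ k I).toLinearMap
          (Ideal.Quotient.mkₐ_surjective k I)
    _ ≤ ℵ₀ := by rw [rank_eq_lift]; exact lift_le_aleph0.2 mk_le_aleph0

variable [Finite σ] [IsAlgClosed k]

theorem exists_forall_eval_eq_zero_of_ne_top {I : Ideal (MvPolynomial σ k)} (hI : I ≠ ⊤) :
    ∃ x : σ → k, ∀ p ∈ I, eval x p = 0 := by
  obtain ⟨J, hJ, hIJ⟩ := Ideal.exists_le_maximal I hI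
  obtain ⟨x, rfl⟩ := eq_vanishingIdeal_singleton_of_isMaximal k hJ
  exact ⟨x, fun p hp => (mem_vanishingIdeal_singleton_iff x p).1 (hIJ hp)⟩

theorem exists_eval_eq_zero_of_not_isUnit {f : MvPolynomial σ k} (hf : ¬IsUnit f) :
    ∃ x : σ → k, eval x f = 0 := by
  obtain ⟨x, hx⟩ := exists_forall_eval_eq_zero_of_ne_top (mt Ideal.span_singleton_eq_top.1 hf)
  exact ⟨x, hx f (Ideal.mem_span_singleton_self f)⟩

theorem isUnit_quotient_mk_of_eval_ne_zero {f g : MvPolynomial σ k}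
    (h : ∀ x, eval x f = 0 → eval x g ≠ 0) :
    IsUnit (Ideal.Quotient.mk (Ideal.span {f}) g) := by
  have htop : Ideal.span {f, g} = ⊤ := by
    by_contra hne
    obtain ⟨x, hx⟩ := exists_forall_eval_eq_zero_of_ne_top hne
    exact h x (hx f (Ideal.subset_span (by simp))) (hx g (Ideal.subset_span (by simp)))
  obtain ⟨u, v, huv⟩ :=
    Ideal.mem_span_pair.1 (htop ▸ Submodule.mem_top : (1 : MvPolynomial σ k) ∈ _)
  refine IsUnit.of_mul_eq_one (Ideal.Quotient.mk _ v) ?_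
  rw [← map_mul, ← map_one (Ideal.Quotient.mk _), Ideal.Quotient.eq, Ideal.mem_span_singleton]
  exact ⟨-u, by linear_combination huv⟩

end MvPolynomial

theorem MvPolynomial.exists_eval_pderiv_eq_mul {σ R : Type*} [CommRing R] {f P : MvPolynomial σ R}
    {a : R} {x : σ → R} (hfP : f ∣ P - C a) (hfx : eval x f = 0) :
    ∃ c : R, ∀ i, eval x (pderiv i P) = c * eval x (pderiv i f) := by
  obtain ⟨g, hg⟩ := hfP
  refine ⟨eval x g, fun i => ?_⟩
  rw [sub_eq_iff_eq_add.1 hg]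
  simp [Derivation.leibniz, hfx]

theorem eval_jacDet_eq_zero_of_dvd {f P Q : MvPolynomial (Fin 2) ℂ} {a b : ℂ} {x : Fin 2 → ℂ}
    (hfP : f ∣ P - C a) (hfQ : f ∣ Q - C b) (hfx : eval x f = 0) :
    eval x (jacDet P Q) = 0 := by
  obtain ⟨c, hc⟩ := exists_eval_pderiv_eq_mul hfP hfx
  obtain ⟨d, hd⟩ := exists_eval_pderiv_eq_mul hfQ hfx
  simp only [jacDet, map_sub, map_mul, hc, hd]
  ring

theorem eval2_apply (p : MvPolynomial (Fin 2) ℂ) (x : Fin 2 → ℂ) :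
    eval2 p (x 0) (x 1) = eval x p := by
  rw [eval2]
  congr
  funext i
  fin_cases i <;> rfl

theorem continuous_polyMap (F : PolyPair) : Continuous (polyMap F) :=
  have hvec : Continuous fun p : ℂ × ℂ => ![p.1, p.2] := by fun_prop
  ((continuous_eval F.1).comp hvec).prodMk ((continuous_eval F.2).comp hvec)

theorem Filter.Tendsto.tendsto_cocompact_of_notMem_range {ι X Y : Type*} [TopologicalSpace X]
    [TopologicalSpace Y] [T2Space Y] {f : X → Y} (hf : Continuous f) {l : Filter ι} {u : ι → X}
    {y : Y} (hu : Tendsto (f ∘ u) l (𝓝 y)) (hy : y ∉ Set.range f) :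
    Tendsto u l (cocompact X) := by
  refine (hasBasis_cocompact.tendsto_right_iff).2 fun K hK => ?_
  have hyK : (f '' K)ᶜ ∈ 𝓝 y :=
    (hK.image hf).isClosed.isOpen_compl.mem_nhds fun ⟨x, _, hx⟩ => hy ⟨x, hx⟩
  filter_upwards [hu hyK] with n hn hnK
  exact hn ⟨u n, hnK, rfl⟩

namespace IsKeller

variable {F : PolyPair}

theorem fst_ne_C (hK : IsKeller F) (k : ℂ) : F.1 ≠ C k := by
  obtain ⟨c, hc, hjac⟩ := hK
  rintro hk
  simp only [jacDet, hk, pderiv_C, zero_mul, sub_zero] at hjac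
  exact hc (C_eq_zero.1 hjac.symm)

theorem exists_eval_fst_eq_and_eval_snd_mem (hK : IsKeller F) (a : ℂ) {S : Set ℂ}
    (hS : ℵ₀ < #S) : ∃ x : Fin 2 → ℂ, eval x F.1 = a ∧ eval x F.2 ∈ S := by
  obtain ⟨c, hc, hjac⟩ := id hK
  have hd0 : F.1 - C a ≠ 0 := sub_ne_zero.2 (hK.fst_ne_C a)
  have hdu : ¬IsUnit (F.1 - C a) := by
    rw [isUnit_iff_eq_C_of_isReduced]
    rintro ⟨k, -, hk⟩
    exact hK.fst_ne_C (a + k) (by rw [C_add, ← hk]; ring)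
  obtain ⟨f, hfi, hfd⟩ := WfDvdMonoid.exists_irreducible_factor hdu hd0
  have hf : Prime f := hfi.prime
  by_contra! hmiss
  let R := MvPolynomial (Fin 2) ℂ ⧸ Ideal.span {f}
  have : IsDomain R :=
    Ideal.Quotient.isDomain_iff_prime _ |>.2 ((Ideal.span_singleton_prime hf.ne_zero).2 hf)
  have hunit : ∀ t ∈ S, IsUnit (Ideal.Quotient.mk (Ideal.span {f}) F.2 - algebraMap ℂ R t) := by
    intro t ht
    change IsUnit (Ideal.Quotient.mk _ F.2 - Ideal.Quotient.mk _ (C t))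
    rw [← map_sub]
    refine isUnit_quotient_mk_of_eval_ne_zero fun x hx hxt => ?_
    obtain ⟨g, hg⟩ := hfd
    have hxa : eval x F.1 = a := by simpa [hx, sub_eq_zero] using congrArg (eval x) hg
    rw [map_sub, eval_C, sub_eq_zero] at hxt
    exact hmiss x hxa (hxt ▸ ht)
  have hrank : lift.{0} (Module.rank ℂ R) < lift.{0} #S := by
    simpa using (rank_quotient_le_aleph0 _).trans_lt hS
  obtain ⟨r, hr⟩ := IsAlgClosed.exists_eq_algebraMap_of_isAlgebraic
    (isAlgebraic_of_isUnit_sub_algebraMap hrank hunit)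
  have hfQ : f ∣ F.2 - C r := Ideal.mem_span_singleton.1 (Ideal.Quotient.eq.1 hr)
  obtain ⟨x, hx⟩ := exists_eval_eq_zero_of_not_isUnit hf.not_isUnit
  have hjac_x := eval_jacDet_eq_zero_of_dvd hfd hfQ hx
  rw [hjac, eval_C] at hjac_x
  exact hc hjac_x

theorem denseRange_polyMap (hK : IsKeller F) : DenseRange (polyMap F) := by
  refine Metric.denseRange_iff.2 fun ⟨a, b⟩ ε hε => ?_
  have hball : ℵ₀ < #(Metric.ball b ε) := aleph0_lt_continuum.trans_le
    (continuum_le_cardinal_of_isOpen ℂ Metric.isOpen_ball (Metric.nonempty_ball.2 hε))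
  obtain ⟨x, hxa, hxb⟩ := hK.exists_eval_fst_eq_and_eval_snd_mem a hball
  refine ⟨(x 0, x 1), ?_⟩
  rw [Prod.dist_eq, polyMap, eval2_apply, eval2_apply, hxa, dist_self, dist_comm]
  exact max_lt hε hxb

end IsKeller

/-- every Picard exceptional value of a Keller mapping is a limiting
value of the mapping along points tending to infinity. -/
theorem picard_exceptional_is_limiting_value (F : PolyPair) (hK : IsKeller F)
    (a b : ℂ) (h : (a, b) ∉ Set.range (polyMap F)) :
    ∃ z : ℕ → ℂ × ℂ, Tendsto (fun n => ‖z n‖) atTop atTop ∧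
      Tendsto (fun n => polyMap F (z n)) atTop (nhds (a, b)) := by
  obtain ⟨w, hw_range, hw_lim⟩ := mem_closure_iff_seq_limit.1 (hK.denseRange_polyMap (a, b))
  choose z hz using hw_range
  have hFz : Tendsto (polyMap F ∘ z) atTop (𝓝 (a, b)) := by
    simpa only [Function.comp_def, hz] using hw_lim
  exact ⟨z, tendsto_norm_cocompact_atTop.comp (hFz.tendsto_cocompact_of_notMem_range
    (continuous_polyMap F) h), hFz⟩
end
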